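/- Let $X_n, X$ be real-valued random variables with $X_n \to X$ almost surely and $F_X$ continuous. Then for every $p \in [1,\infty)$, $\mathbb{E}|F_{X_n}(X_n) - F_X(X)|^p \to 0$ as $n \to \infty$. -/

import Mathlib

open MeasureTheory Filter Set Topology ProbabilityTheory

/-!
Almost sure convergence implies convergence in distribution, so by the portmanteau theorem
`F_{Xₙ} → F_X` pointwise, the boundary `{y}` of `Iic y` being null because `F_X` is continuous.
Monotonicity of each `F_{Xₙ}` and continuity of `F_X` upgrade this to
`F_{Xₙ}(Xₙ ω) → F_X(X ω)` wherever `Xₙ ω → X ω`. The integrands are bounded by `1`, so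
dominated convergence concludes.
-/

theorem tendsto_apply_of_monotone_of_continuousAt {ι α β : Type*} [LinearOrder α]
    [TopologicalSpace α] [OrderTopology α] [DenselyOrdered α] [NoMinOrder α] [NoMaxOrder α]
    [Preorder β] [TopologicalSpace β] [OrderTopology β] {l : Filter ι}
    {G : ι → α → β} {g : α → β} {u : ι → α} {x : α}
    (hG : ∀ i, Monotone (G i)) (hGg : ∀ z, Tendsto (fun i => G i z) l (𝓝 (g z)))
    (hg : ContinuousAt g x) (hu : Tendsto u l (𝓝 x)) :
    Tendsto (fun i => G i (u i)) l (𝓝 (g x)) := by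
  refine tendsto_order.2 ⟨fun a ha => ?_, fun a ha => ?_⟩
  · obtain ⟨z, hzx, hz⟩ : ∃ z < x, a < g z := by
      obtain ⟨w, hwx, hw⟩ := exists_Ioc_subset_of_mem_nhds (hg.eventually (lt_mem_nhds ha))
        (exists_lt x)
      obtain ⟨z, hwz, hzx⟩ := exists_between hwx
      exact ⟨z, hzx, hw ⟨hwz, hzx.le⟩⟩
    filter_upwards [(hGg z).eventually (lt_mem_nhds hz), hu.eventually (lt_mem_nhds hzx)]
      with i hGz hzu
    exact hGz.trans_le (hG i hzu.le)
  · obtain ⟨z, hxz, hz⟩ : ∃ z > x, g z < a := by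
      obtain ⟨w, hxw, hw⟩ := exists_Ico_subset_of_mem_nhds (hg.eventually (gt_mem_nhds ha))
        (exists_gt x)
      obtain ⟨z, hxz, hzw⟩ := exists_between hxw
      exact ⟨z, hxz, hw ⟨hxz.le, hzw⟩⟩
    filter_upwards [(hGg z).eventually (gt_mem_nhds hz), hu.eventually (gt_mem_nhds hxz)]
      with i hGz huz
    exact (hG i huz.le).trans_lt hGz

theorem measure_preimage_singleton_eq_zero_of_continuousAt {Ω : Type*} [MeasurableSpace Ω]
    {μ : Measure Ω} [IsProbabilityMeasure μ] {X : Ω → ℝ} (hX : AEMeasurable X μ) {y : ℝ}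
    (hF : ContinuousAt (fun x => μ.real {ω | X ω ≤ x}) y) :
    μ (X ⁻¹' {y}) = 0 := by
  have : IsProbabilityMeasure (μ.map X) := Measure.isProbabilityMeasure_map hX
  have hcdf : cdf (μ.map X) = fun x => μ.real {ω | X ω ≤ x} := by
    ext x
    rw [cdf_eq_real, map_measureReal_apply_of_aemeasurable hX measurableSet_Iic]
    rfl
  have hleft : Function.leftLim (cdf (μ.map X)) y = cdf (μ.map X) y :=
    (monotone_cdf _).continuousWithinAt_Iio_iff_leftLim_eq.1
      (hcdf ▸ hF).continuousWithinAt
  rw [← Measure.map_apply_of_aemeasurable hX (measurableSet_singleton y),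
    ← measure_cdf (μ.map X), StieltjesFunction.measure_singleton, hleft, sub_self,
    ENNReal.ofReal_zero]

theorem tendsto_measure_preimage_of_tendsto_ae {ι Ω E : Type*} {l : Filter ι}
    [l.IsCountablyGenerated] [MeasurableSpace Ω] {μ : Measure Ω} [IsProbabilityMeasure μ]
    [TopologicalSpace E] [MeasurableSpace E] [BorelSpace E] [HasOuterApproxClosed E]
    {Xs : ι → Ω → E} {X : Ω → E}
    (hXs : ∀ i, AEMeasurable (Xs i) μ) (hX : AEMeasurable X μ)
    (hlim : ∀ᵐ ω ∂μ, Tendsto (fun i => Xs i ω) l (𝓝 (X ω)))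
    {s : Set E} (hs : MeasurableSet s) (hfr : μ (X ⁻¹' frontier s) = 0) :
    Tendsto (fun i => μ (Xs i ⁻¹' s)) l (𝓝 (μ (X ⁻¹' s))) := by
  have hlaw := (tendstoInDistribution_of_ae_tendsto hXs hX hlim).tendsto
  have := ProbabilityMeasure.tendsto_measure_of_null_frontier_of_tendsto' hlaw (E := s) (by
    simpa [Measure.map_apply_of_aemeasurable hX isClosed_frontier.measurableSet] using hfr)
  simpa [Measure.map_apply_of_aemeasurable, hX, hXs, hs] using this

theorem tendsto_measureReal_le_of_tendsto_ae {ι Ω : Type*} {l : Filter ι}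
    [l.IsCountablyGenerated] [MeasurableSpace Ω] {μ : Measure Ω} [IsProbabilityMeasure μ]
    {Xs : ι → Ω → ℝ} {X : Ω → ℝ}
    (hXs : ∀ i, AEMeasurable (Xs i) μ) (hX : AEMeasurable X μ)
    (hlim : ∀ᵐ ω ∂μ, Tendsto (fun i => Xs i ω) l (𝓝 (X ω))) {y : ℝ}
    (hF : ContinuousAt (fun x => μ.real {ω | X ω ≤ x}) y) :
    Tendsto (fun i => μ.real {ω | Xs i ω ≤ y}) l (𝓝 (μ.real {ω | X ω ≤ y})) := by
  have hatom : μ (X ⁻¹' frontier (Iic y)) = 0 := by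
    rw [frontier_Iic]
    exact measure_preimage_singleton_eq_zero_of_continuousAt hX hF
  exact (ENNReal.tendsto_toReal (measure_ne_top _ _)).comp
    (tendsto_measure_preimage_of_tendsto_ae hXs hX hlim measurableSet_Iic hatom)

theorem abs_measureReal_sub_measureReal_le_one {Ω : Type*} [MeasurableSpace Ω] {μ : Measure Ω}
    [IsProbabilityMeasure μ] (s t : Set Ω) : |μ.real s - μ.real t| ≤ 1 := by
  rw [abs_sub_le_iff]
  have hs : μ.real s ≤ 1 := measureReal_le_one
  have ht : μ.real t ≤ 1 := measureReal_le_one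
  have hs₀ : 0 ≤ μ.real s := measureReal_nonneg
  have ht₀ : 0 ≤ μ.real t := measureReal_nonneg
  constructor <;> linarith

/-- If `Xₙ → X` almost surely and the CDF of `X` is continuous, then for every
`p ∈ [1,∞)`, `𝔼|F_{Xₙ}(Xₙ) - F_X(X)|^p → 0`. -/
theorem stmt_3
    {Ω : Type*} [MeasurableSpace Ω] (μ : Measure Ω) [IsProbabilityMeasure μ]
    (Xn : ℕ → Ω → ℝ) (X : Ω → ℝ)
    (hXn : ∀ n, Measurable (Xn n)) (hX : Measurable X)
    (Fn : ℕ → ℝ → ℝ) (hFn : ∀ n x, Fn n x = (μ {ω | Xn n ω ≤ x}).toReal)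
    (F : ℝ → ℝ) (hF : ∀ x, F x = (μ {ω | X ω ≤ x}).toReal)
    (hFcont : Continuous F)
    (has : ∀ᵐ ω ∂μ, Tendsto (fun n => Xn n ω) atTop (nhds (X ω))) :
    ∀ p : ℝ, 1 ≤ p →
      Tendsto (fun n => ∫ ω, |Fn n (Xn n ω) - F (X ω)| ^ p ∂μ) atTop (nhds 0) := by
  intro p hp
  simp only [← measureReal_def] at hFn hF
  have hcdf (y : ℝ) : Tendsto (fun n => Fn n y) atTop (𝓝 (F y)) := by
    simpa only [hFn, hF] using tendsto_measureReal_le_of_tendsto_ae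
      (fun n => (hXn n).aemeasurable) hX.aemeasurable has (funext hF ▸ hFcont.continuousAt)
  have hmono (n : ℕ) : Monotone (Fn n) := fun x y hxy => by
    rw [hFn, hFn]
    exact measureReal_mono fun ω (hω : Xn n ω ≤ x) => hω.trans hxy
  have hbound (n : ℕ) (ω : Ω) : ‖|Fn n (Xn n ω) - F (X ω)| ^ p‖ ≤ 1 := by
    rw [Real.norm_of_nonneg (by positivity)]
    exact Real.rpow_le_one (abs_nonneg _)
      (hFn n _ ▸ hF _ ▸ abs_measureReal_sub_measureReal_le_one _ _) (by linarith)
  have hmeas (n : ℕ) : AEStronglyMeasurable (fun ω => |Fn n (Xn n ω) - F (X ω)| ^ p) μ :=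
    ((((hmono n).measurable.comp (hXn n)).sub (hFcont.measurable.comp hX)).abs.pow_const
      p).aestronglyMeasurable
  have hconv :
      ∀ᵐ ω ∂μ, Tendsto (fun n => |Fn n (Xn n ω) - F (X ω)| ^ p) atTop (𝓝 0) := by
    filter_upwards [has] with ω hω
    have hlim : Tendsto (fun n => |Fn n (Xn n ω) - F (X ω)|) atTop (𝓝 0) := by
      simpa using ((tendsto_apply_of_monotone_of_continuousAt hmono hcdf hFcont.continuousAt
        hω).sub_const (F (X ω))).abs
    exact hlim.rpow_const_nhds_zero (by linarith)
  simpa using tendsto_integral_of_dominated_convergence (fun _ => 1) hmeas (integrable_const 1)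
    (fun n => .of_forall (hbound n)) hconv
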